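/- Consider LHS in dimension d with n points: for each coordinate j, x_{i,j} = (σ_j(i) + r_{i,j})/n where σ_1,...,σ_d are independent uniformly random permutations of {0,...,n−1} and r_{i,j} are i.i.d. uniform on [0,1). Let m ≤ n. The probability that no point of the sample lies in the box [0, m/n]^d equals the probability that no index i satisfies σ_j(i) < m for all j simultaneously, and this probability is at most (1 − (m/n)^{d-1})^m. -/

import Mathlib

open Finset Equiv Nat

/-!
Fix the first permutation `σ₀`: exactly `m` indices `i` satisfy `σ₀ i < m`, and these must then
be avoided by the other `d - 1` permutations. For a set `S` of indices, the probability that no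
`i ∈ S` has `τ j i < m` for all `j < c` is at most `(1 - (m/n)^c)^#S`, by induction on `c`:
after one uniform permutation `τ` the indices still to be avoided form `S ∩ τ⁻¹ [0, m)`, whose
size `X` is hypergeometric, and the moment bound `E[a^X] ≤ (1 - (1 - a) (m/n))^#S` for
`0 ≤ a ≤ 1` (sampling without replacement is dominated by sampling with replacement) closes the
induction. That moment bound is proved by induction on `n`, conditioning on the image of one point
of `S`; the inductive step comes down to Bernoulli's inequality.
-/

theorem one_add_pow_mul_one_sub_mul_le_one {y : ℝ} (t : ℕ) (hy₀ : -1 ≤ y) (hy₁ : y ≤ 1) :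
    (1 + y) ^ t * (1 - t * y) ≤ 1 := by
  rcases le_or_gt (1 - t * y) 0 with h | h
  · nlinarith [pow_nonneg (show 0 ≤ 1 + y by linarith) t]
  · calc (1 + y) ^ t * (1 - t * y) ≤ (1 + y) ^ t * (1 - y) ^ t := by
          gcongr
          · exact pow_nonneg (by linarith) t
          · simpa [sub_eq_add_neg, mul_comm] using one_add_mul_le_pow (a := -y) (by linarith) t
      _ = (1 - y ^ 2) ^ t := by rw [← mul_pow]; ring
      _ ≤ 1 := pow_le_one₀ (by nlinarith) (by nlinarith)

theorem add_pow_mul_sub_mul_le_pow_succ {C y : ℝ} (t : ℕ) (hC : 0 < C) (hy₀ : -C ≤ y)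
    (hy₁ : y ≤ C) : (C + y) ^ t * (C - t * y) ≤ C ^ (t + 1) := by
  have h := one_add_pow_mul_one_sub_mul_le_one t (y := y / C)
    (by rwa [le_div_iff₀ hC, neg_one_mul]) (by rwa [div_le_one hC])
  have e₁ : 1 + y / C = (C + y) / C := by field_simp
  have e₂ : 1 - t * (y / C) = (C - t * y) / C := by field_simp
  calc (C + y) ^ t * (C - t * y) = C ^ (t + 1) * ((1 + y / C) ^ t * (1 - t * (y / C))) := by
        rw [e₁, e₂, div_pow]; field_simp; ring
    _ ≤ C ^ (t + 1) := mul_le_of_le_one_right (by positivity) h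

theorem mul_add_pow_add_mul_sub_pow_le {C Δ δ p q N : ℝ} (s : ℕ) (hC : 0 < C) (hΔ₀ : 0 ≤ Δ)
    (hΔ : Δ ≤ C) (hδ₀ : 0 ≤ δ) (hδ : δ ≤ C) (hu : 0 < C - s * Δ) (hp : 0 ≤ p) (hq : 0 ≤ q)
    (h : p * (C + s * δ) + q * (C - s * Δ) ≤ N * ((C - s * Δ) * (C + s * δ))) :
    p * (C + Δ) ^ s + q * (C - δ) ^ s ≤ N * C ^ (s + 1) := by
  have hw : 0 < C + s * δ := by positivity
  have hΔs : (C + Δ) ^ s * (C - s * Δ) ≤ C ^ (s + 1) :=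
    add_pow_mul_sub_mul_le_pow_succ s hC (by linarith) hΔ
  have hδs : (C - δ) ^ s * (C + s * δ) ≤ C ^ (s + 1) := by
    simpa [sub_eq_add_neg] using add_pow_mul_sub_mul_le_pow_succ s hC (y := -δ) (by linarith)
      (by linarith)
  refine le_of_mul_le_mul_right ?_ (mul_pos hu hw)
  linear_combination mul_le_mul_of_nonneg_left hΔs (mul_nonneg hp hw.le)
    + mul_le_mul_of_nonneg_left hδs (mul_nonneg hq hu.le)
    + mul_le_mul_of_nonneg_left h (by positivity : 0 ≤ C ^ (s + 1))

theorem hypergeometric_moment_step_of_le {n α a : ℝ} {s : ℕ} (hn : 1 ≤ n) (hα₀ : 0 ≤ α)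
    (hαn : α ≤ n) (ha₀ : 0 < a) (ha₁ : a ≤ 1) (hs : s ≤ n) :
    α * a * (1 - (1 - a) * (α - 1) / n) ^ s + (n + 1 - α) * (1 - (1 - a) * α / n) ^ s
      ≤ (n + 1) * (1 - (1 - a) * α / (n + 1)) ^ (s + 1) := by
  set b := 1 - a with hb
  set C := 1 - b * α / (n + 1) with hC
  set Δ := b * (n + 1 - α) / ((n + 1) * n) with hΔ
  set δ := b * α / ((n + 1) * n) with hδ
  have hΔ₀ : 0 ≤ Δ := div_nonneg (by nlinarith) (by positivity)
  have hδ₀ : 0 ≤ δ := by positivity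
  have hCΔ : C - n * Δ = a := by rw [hC, hΔ, hb]; field_simp; ring
  have hu : 0 < C - s * Δ := by nlinarith
  have hCδ : C - δ = 1 - b * α / n := by rw [hC, hδ]; field_simp; ring
  have hbα : b * α / n ≤ 1 := by rw [div_le_one (by linarith)]; nlinarith
  have hslack : (n + 1) * ((C - s * Δ) * (C + s * δ))
        - (α * a * (C + s * δ) + (n + 1 - α) * (C - s * Δ))
      = s * b ^ 2 * α * (n + 1 - α) * (n - s) / ((n + 1) * n ^ 2) := by
    rw [hC, hΔ, hδ, hb]; field_simp; ring
  have hslack₀ : 0 ≤ s * b ^ 2 * α * (n + 1 - α) * (n - s) / ((n + 1) * n ^ 2) := by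
    have : 0 ≤ n + 1 - α := by linarith
    have : 0 ≤ n - s := by linarith
    positivity
  have hA : 1 - b * (α - 1) / n = C + Δ := by rw [hC, hΔ]; field_simp; ring
  rw [hA, ← hCδ]
  exact mul_add_pow_add_mul_sub_pow_le s (by nlinarith) hΔ₀ (by nlinarith) hδ₀ (by linarith) hu
    (by positivity) (by linarith) (by linarith)

/- Conditioning on the image `p` of one point of `S` under a permutation of `Fin (n + 1)`, which
lies in `A` (with `#A = α`) for `α` of the `n + 1` choices of `p`, this inequality is the inductive
step of `sum_perm_pow_card_filter_mem_le`. -/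
theorem hypergeometric_moment_step {n α s : ℕ} (hα : α ≤ n + 1) (hs : s ≤ n) {a : ℝ}
    (ha₀ : 0 ≤ a) (ha₁ : a ≤ 1) :
    α * a * (1 - (1 - a) * (α - 1) / n) ^ s + (n + 1 - α) * (1 - (1 - a) * α / n) ^ s
      ≤ (n + 1) * (1 - (1 - a) * α / (n + 1)) ^ (s + 1) := by
  rcases Nat.eq_zero_or_pos s with rfl | hs₁
  · have e : (n + 1 : ℝ) * (1 - (1 - a) * α / (n + 1)) = α * a + (n + 1 - α) := by
      field_simp; ring
    simp only [pow_zero, mul_one, zero_add, pow_one, e, le_refl]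
  have hn : (1 : ℝ) ≤ n := by exact_mod_cast hs₁.trans_le hs
  rcases hα.eq_or_lt with rfl | hαn
  · push_cast
    have e₁ : 1 - (1 - a) * (n + 1 - 1) / n = a := by field_simp; ring
    have e₂ : 1 - (1 - a) * (n + 1) / (n + 1) = a := by field_simp; ring
    rw [e₁, e₂, pow_succ]; ring_nf; rfl
  have hαn : (α : ℝ) ≤ n := by exact_mod_cast Nat.lt_succ_iff.mp hαn
  rcases ha₀.eq_or_lt with rfl | ha₀
  · have e : (n + 1 : ℝ) * (1 - α / (n + 1)) = n + 1 - α := by field_simp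
    rw [pow_succ, mul_comm _ (1 - _), ← mul_assoc, sub_zero, one_mul, one_mul, e]
    simp only [mul_zero, zero_mul, zero_add]
    gcongr
    · linarith
    · rw [sub_nonneg, div_le_one (by linarith)]; exact hαn
    · linarith
  exact hypergeometric_moment_step_of_le hn α.cast_nonneg hαn ha₀ ha₁ (by exact_mod_cast hs)

theorem sum_perm_pow_card_filter_map {ι : Type*} [Fintype ι] [DecidableEq ι] (π : Perm ι)
    (S A : Finset ι) (a : ℝ) :
    ∑ τ : Perm ι, a ^ #{i ∈ S.map π.toEmbedding | τ i ∈ A}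
      = ∑ τ : Perm ι, a ^ #{i ∈ S | τ i ∈ A} := by
  refine Fintype.sum_equiv (Equiv.mulRight π) _ _ fun τ => ?_
  rw [filter_map, card_map]
  rfl

theorem card_filter_succ_mem_add_one {n : ℕ} {S : Finset (Fin (n + 1))} (h0 : 0 ∈ S) :
    #{x : Fin n | x.succ ∈ S} + 1 = #S := by
  simpa [h0] using (Fin.card_filter_univ_succ (· ∈ S)).symm

theorem card_filter_swap_succ_mem {n : ℕ} (p : Fin (n + 1)) (A : Finset (Fin (n + 1))) :
    #{x : Fin n | swap 0 p x.succ ∈ A} = #(A.erase p) := by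
  have h := Fin.card_filter_univ_succ' fun z => z ≠ 0 ∧ swap 0 p z ∈ A
  simp only [ne_eq, not_true_eq_false, false_and, ite_false, zero_add, Fin.succ_ne_zero,
    not_false_eq_true, true_and] at h
  rw [← h]
  apply card_equiv (swap 0 p)
  intro z
  simp [swap_apply_eq_iff]

theorem card_filter_decomposeFin_symm_mem {n : ℕ} {S A : Finset (Fin (n + 1))} (h0 : 0 ∈ S)
    (p : Fin (n + 1)) (e : Perm (Fin n)) :
    #{i ∈ S | Perm.decomposeFin.symm (p, e) i ∈ A}
      = (if p ∈ A then 1 else 0) + #{x : Fin n | x.succ ∈ S ∧ swap 0 p (e x).succ ∈ A} := by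
  have h := Fin.card_filter_univ_succ' fun i => i ∈ S ∧ Perm.decomposeFin.symm (p, e) i ∈ A
  simp only [Perm.decomposeFin_symm_apply_zero, Perm.decomposeFin_symm_apply_succ, h0,
    true_and] at h
  rwa [← filter_filter, filter_mem_eq_inter, univ_inter] at h

theorem sum_perm_succ_pow_card_filter_mem {n : ℕ} {S : Finset (Fin (n + 1))}
    (h0 : 0 ∈ S) (A : Finset (Fin (n + 1))) (a : ℝ) :
    ∑ τ : Perm (Fin (n + 1)), a ^ #{i ∈ S | τ i ∈ A}
      = ∑ p, (if p ∈ A then a else 1) * ∑ e : Perm (Fin n),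
          a ^ #{x ∈ ({x | x.succ ∈ S} : Finset (Fin n)) | e x ∈
            ({y | swap 0 p y.succ ∈ A} : Finset (Fin n))} := by
  rw [← Perm.decomposeFin.symm.sum_comp, Fintype.sum_prod_type]
  simp_rw [card_filter_decomposeFin_symm_mem h0, pow_add, apply_ite (a ^ ·), pow_one, pow_zero,
    ← mul_sum]
  simp only [filter_filter, mem_filter, mem_univ, true_and]

theorem sum_ite_mem_const {ι M : Type*} [Fintype ι] [DecidableEq ι] [AddCommMonoid M]
    (A : Finset ι) (x y : M) :
    ∑ p, (if p ∈ A then x else y) = #A • x + #Aᶜ • y := by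
  rw [sum_ite, sum_const, sum_const, filter_mem_eq_inter, univ_inter, filter_not,
    filter_mem_eq_inter, univ_inter, ← compl_eq_univ_sdiff]

theorem sum_perm_pow_card_filter_mem_le (n : ℕ) (S A : Finset (Fin n)) {a : ℝ} (ha₀ : 0 ≤ a)
    (ha₁ : a ≤ 1) :
    ∑ τ : Perm (Fin n), a ^ #{i ∈ S | τ i ∈ A} ≤ n ! * (1 - (1 - a) * #A / n) ^ #S := by
  induction n with
  | zero => simp [Subsingleton.elim S ∅]
  | succ n ih =>
    rcases S.eq_empty_or_nonempty with rfl | hS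
    · simp [Fintype.card_perm]
    wlog h0 : 0 ∈ S generalizing S
    · obtain ⟨i₀, hi₀⟩ := hS
      have h0 : 0 ∈ S.map (swap i₀ 0).toEmbedding := mem_map.mpr ⟨i₀, hi₀, swap_apply_left i₀ 0⟩
      have h := this _ ⟨0, h0⟩ h0
      rwa [sum_perm_pow_card_filter_map, card_map] at h
    set S₁ : Finset (Fin n) := {x | x.succ ∈ S}
    have hcard : (#Aᶜ : ℝ) = n + 1 - #A := by
      rw [card_compl, Fintype.card_fin, Nat.cast_sub (card_le_univ A |>.trans_eq (by simp))]
      push_cast; ring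
    calc ∑ τ : Perm (Fin (n + 1)), a ^ #{i ∈ S | τ i ∈ A}
        ≤ ∑ p, if p ∈ A then a * (n ! * (1 - (1 - a) * (#A - 1) / n) ^ #S₁)
            else n ! * (1 - (1 - a) * #A / n) ^ #S₁ := by
          rw [sum_perm_succ_pow_card_filter_mem h0]
          gcongr with p _
          have h := ih S₁ {y | swap 0 p y.succ ∈ A}
          rw [card_filter_swap_succ_mem] at h
          split_ifs with hp
          · rw [card_erase_of_mem hp, Nat.cast_pred (card_pos.2 ⟨p, hp⟩)] at h
            exact mul_le_mul_of_nonneg_left h ha₀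
          · rwa [erase_eq_of_notMem hp, ← one_mul (∑ _, _)] at h
      _ = n ! * (#A * a * (1 - (1 - a) * (#A - 1) / n) ^ #S₁
            + (n + 1 - #A) * (1 - (1 - a) * #A / n) ^ #S₁) := by
          rw [sum_ite_mem_const, nsmul_eq_mul, nsmul_eq_mul, hcard]
          ring
      _ ≤ n ! * ((n + 1) * (1 - (1 - a) * #A / (n + 1)) ^ (#S₁ + 1)) := by
          gcongr
          exact hypergeometric_moment_step (card_le_univ A |>.trans (by simp))
            (card_le_univ S₁ |>.trans (by simp)) ha₀ ha₁
      _ = (n + 1)! * (1 - (1 - a) * #A / ↑(n + 1)) ^ #S := by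
          rw [← card_filter_succ_mem_add_one h0, factorial_succ]
          push_cast
          ring

theorem add_div_mem_Ico_iff {n m k : ℕ} {r : ℝ} (hn : 0 < n) (hr : r ∈ Set.Ico (0 : ℝ) 1) :
    ((k : ℝ) + r) / n ∈ Set.Ico (0 : ℝ) (m / n) ↔ k < m := by
  obtain ⟨hr₀, hr₁⟩ := hr
  rw [Set.mem_Ico, div_lt_div_iff_of_pos_right (by positivity)]
  constructor
  · rintro ⟨-, h⟩
    exact_mod_cast (le_add_of_nonneg_right hr₀).trans_lt h
  · intro h
    have : (k : ℝ) + 1 ≤ m := by exact_mod_cast h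
    exact ⟨by positivity, by linarith⟩

def avoidingTuples (n m c : ℕ) (S : Finset (Fin n)) : Finset (Fin c → Perm (Fin n)) :=
  {τ | ¬ ∃ i ∈ S, ∀ j, (τ j i : ℕ) < m}

theorem card_avoidingTuples_succ (n m c : ℕ) (S : Finset (Fin n)) :
    #(avoidingTuples n m (c + 1) S)
      = ∑ τ₀ : Perm (Fin n), #(avoidingTuples n m c {i ∈ S | (τ₀ i : ℕ) < m}) := by
  simp only [avoidingTuples, card_filter]
  rw [← (Fin.consEquiv fun _ => Perm (Fin n)).sum_comp, Fintype.sum_prod_type]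
  simp [Fin.forall_fin_succ, and_assoc]

theorem card_filter_perm_val_lt {n m : ℕ} (hmn : m ≤ n) (τ : Perm (Fin n)) :
    #{i | (τ i : ℕ) < m} = m := by
  rw [card_equiv τ (t := {x : Fin n | (x : ℕ) < m}) (by simp), Fin.card_filter_val_lt,
    min_eq_right hmn]

theorem card_avoidingTuples_le {n m : ℕ} (hmn : m ≤ n) (c : ℕ) (S : Finset (Fin n)) :
    (#(avoidingTuples n m c S) : ℝ) ≤ n ! ^ c * (1 - ((m : ℝ) / n) ^ c) ^ #S := by
  induction c generalizing S with
  | zero =>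
    rcases S.eq_empty_or_nonempty with rfl | hS
    · simp [avoidingTuples]
    · simp [avoidingTuples, zero_pow hS.card_pos.ne']
      exact hS
  | succ c ih =>
    set a := 1 - ((m : ℝ) / n) ^ c
    have hq : (m : ℝ) / n ≤ 1 := div_le_one_of_le₀ (by exact_mod_cast hmn) (by positivity)
    have ha₀ : 0 ≤ a := sub_nonneg.2 (pow_le_one₀ (by positivity) hq)
    have ha₁ : a ≤ 1 := sub_le_self _ (by positivity)
    calc (#(avoidingTuples n m (c + 1) S) : ℝ)
        = ∑ τ₀ : Perm (Fin n), (#(avoidingTuples n m c {i ∈ S | (τ₀ i : ℕ) < m}) : ℝ) := by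
          rw [card_avoidingTuples_succ]; push_cast; rfl
      _ ≤ ∑ τ₀ : Perm (Fin n),
            n ! ^ c * a ^ #{i ∈ S | τ₀ i ∈ ({x | (x : ℕ) < m} : Finset (Fin n))} := by
          gcongr with τ₀
          simpa using ih _
      _ ≤ n ! ^ c * (n ! * (1 - (1 - a) * m / n) ^ #S) := by
          rw [← mul_sum]
          gcongr
          simpa [Fin.card_filter_val_lt, min_eq_right hmn] using
            sum_perm_pow_card_filter_mem_le n S {x | (x : ℕ) < m} ha₀ ha₁
      _ = n ! ^ (c + 1) * (1 - ((m : ℝ) / n) ^ (c + 1)) ^ #S := by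
          simp only [a]; ring

theorem stmt9_general (d n m : ℕ) (hd : 1 ≤ d) (hmn : m ≤ n)
    (σ : Fin d → Equiv.Perm (Fin n)) :
    (∀ r : Fin n → Fin d → ℝ, (∀ i j, r i j ∈ Set.Ico (0 : ℝ) 1) →
      ((¬ ∃ i : Fin n, ∀ j : Fin d,
          ((σ j i : ℝ) + r i j) / n ∈ Set.Ico (0 : ℝ) ((m : ℝ) / n)) ↔
        ¬ ∃ i : Fin n, ∀ j : Fin d, (σ j i : ℕ) < m))
    ∧ ((Finset.univ.filter fun τ : Fin d → Equiv.Perm (Fin n) =>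
          ¬ ∃ i : Fin n, ∀ j : Fin d, (τ j i : ℕ) < m).card : ℝ)
          / ((n.factorial : ℝ) ^ d)
        ≤ (1 - ((m : ℝ) / n) ^ (d - 1)) ^ m := by
  refine ⟨fun r hr => not_congr <| exists_congr fun i => forall_congr' fun j =>
    add_div_mem_Ico_iff i.pos (hr i j), ?_⟩
  obtain ⟨c, rfl⟩ : ∃ c, d = c + 1 := ⟨d - 1, by omega⟩
  have h : univ.filter (fun τ : Fin (c + 1) → Perm (Fin n) => ¬ ∃ i : Fin n, ∀ j, (τ j i : ℕ) < m)
      = avoidingTuples n m (c + 1) univ := by simp [avoidingTuples]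
  rw [h, div_le_iff₀ (by positivity), card_avoidingTuples_succ]
  push_cast
  calc ∑ τ₀ : Perm (Fin n), (#(avoidingTuples n m c {i | (τ₀ i : ℕ) < m}) : ℝ)
      ≤ ∑ τ₀ : Perm (Fin n), n ! ^ c * (1 - ((m : ℝ) / n) ^ c) ^ m := by
        gcongr with τ₀
        simpa [card_filter_perm_val_lt hmn] using card_avoidingTuples_le hmn c {i | (τ₀ i : ℕ) < m}
    _ = (1 - ((m : ℝ) / n) ^ (c + 1 - 1)) ^ m * n ! ^ (c + 1) := by
        simp [Fintype.card_perm]; ring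

/-- d-dimensional Latin Hypercube Sampling with `n` points: for permutations
`σ j` (one per coordinate) and jitters `r i j ∈ [0,1)`, the `j`-th coordinate of the
`i`-th point is `(σ j i + r i j)/n`.  (1) Missing the box `[0, m/n)^d` is equivalent to
no index `i` satisfying `σ j i < m` for all `j`; (2) the probability of this event under
uniformly random independent permutations is at most `(1 - (m/n)^(d-1))^m`. -/
theorem stmt9 (d n m : ℕ) (hd : 1 ≤ d) (hm : 1 ≤ m) (hmn : m ≤ n)
    (σ : Fin d → Equiv.Perm (Fin n)) :
    (∀ r : Fin n → Fin d → ℝ, (∀ i j, r i j ∈ Set.Ico (0 : ℝ) 1) →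
      ((¬ ∃ i : Fin n, ∀ j : Fin d,
          ((σ j i : ℝ) + r i j) / n ∈ Set.Ico (0 : ℝ) ((m : ℝ) / n)) ↔
        ¬ ∃ i : Fin n, ∀ j : Fin d, (σ j i : ℕ) < m))
    ∧ ((Finset.univ.filter fun τ : Fin d → Equiv.Perm (Fin n) =>
          ¬ ∃ i : Fin n, ∀ j : Fin d, (τ j i : ℕ) < m).card : ℝ)
          / ((n.factorial : ℝ) ^ d)
        ≤ (1 - ((m : ℝ) / n) ^ (d - 1)) ^ m :=
  stmt9_general d n m hd hmn σ
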